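/- arXiv:2111.13211 — 4 statements merged into one kernel-verified Lean document; each statement's English description precedes it below -/
import Mathlib

section
/- Let M be a real N×N matrix all of whose eigenvalues have negative real part, and let S = {x ∈ ℝ^N : xᵀPx = 1} where P is the symmetric positive definite solution of PM + MᵀP = -I. Then the map ψ : ℝ × S → ℝ^N \ {0}, ψ(t,x) = exp(tM)·x, is a bijection. -/
/-! Along a trajectory `y(t) = exp(tM) z` the Lyapunov function `V(y) = yᵀPy` satisfies
`d/dt V(y) = yᵀ(PM + MᵀP)y = -|y|²`, while `V(y) ≤ C|y|²`. Hence `t ↦ log V(y(t))` has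
derivative at most `-1/C`, so for `z ≠ 0` it is a bijection `ℝ → ℝ`: the trajectory through `z`
crosses the sphere `V = 1` at exactly one time. -/

open Matrix NormedSpace Set

theorem bijective_of_deriv_le_neg {f : ℝ → ℝ} (hf : Differentiable ℝ f) {ε : ℝ} (hε : 0 < ε)
    (hf' : ∀ t, deriv f t ≤ -ε) : Function.Bijective f := by
  refine ⟨(strictAnti_of_deriv_neg fun t => (hf' t).trans_lt (neg_lt_zero.2 hε)).injective,
    fun y => ?_⟩
  set a := |f 0 - y| / ε
  have ha : 0 ≤ a := by positivity
  have hεa : ε * a = |f 0 - y| := mul_div_cancel₀ _ hε.ne'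
  have h_right := image_sub_le_mul_sub_of_deriv_le hf hf' ha
  have h_left := image_sub_le_mul_sub_of_deriv_le hf hf' (neg_nonpos.2 ha)
  have hmem : y ∈ Icc (f a) (f (-a)) := by
    constructor <;> nlinarith [le_abs_self (f 0 - y), neg_abs_le (f 0 - y)]
  obtain ⟨t, -, rfl⟩ := intermediate_value_Icc' (by linarith) hf.continuous.continuousOn hmem
  exact ⟨t, rfl⟩

section

variable {n : Type*} [Fintype n]

theorem HasDerivAt.dotProduct {f g : ℝ → n → ℝ} {f' g' : n → ℝ} {t : ℝ}
    (hf : HasDerivAt f f' t) (hg : HasDerivAt g g' t) :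
    HasDerivAt (fun s => f s ⬝ᵥ g s) (f' ⬝ᵥ g t + f t ⬝ᵥ g') t :=
  (HasDerivAt.fun_sum (u := Finset.univ) fun i _ =>
    (hasDerivAt_pi.1 hf i).mul (hasDerivAt_pi.1 hg i)).congr_deriv Finset.sum_add_distrib

theorem HasDerivAt.matrix_mulVec {m : Type*} [Fintype m] (A : Matrix m n ℝ) {f : ℝ → n → ℝ}
    {f' : n → ℝ} {t : ℝ} (hf : HasDerivAt f f' t) :
    HasDerivAt (fun s => A *ᵥ f s) (A *ᵥ f') t :=
  ((mulVecBilin ℝ ℝ A).toContinuousLinearMap.hasFDerivAt (x := f t)).comp_hasDerivAt t hf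

open scoped Matrix.Norms.L2Operator in
theorem exists_pos_dotProduct_mulVec_le (P : Matrix n n ℝ) :
    ∃ C > 0, ∀ u : n → ℝ, u ⬝ᵥ P *ᵥ u ≤ C * (u ⬝ᵥ u) := by
  classical
  refine ⟨‖P‖ + 1, by positivity, fun u => ?_⟩
  set v := WithLp.toLp 2 u
  have hnorm : u ⬝ᵥ u = ‖v‖ ^ 2 := by
    rw [← real_inner_self_eq_norm_sq, EuclideanSpace.inner_toLp_toLp, star_trivial]
  calc u ⬝ᵥ P *ᵥ u = inner ℝ v (WithLp.toLp 2 (P *ᵥ u)) := by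
        rw [EuclideanSpace.inner_toLp_toLp, star_trivial, dotProduct_comm]
    _ ≤ ‖v‖ * (‖P‖ * ‖v‖) :=
        (real_inner_le_norm _ _).trans <|
          mul_le_mul_of_nonneg_left (l2_opNorm_mulVec P v) (norm_nonneg v)
    _ ≤ (‖P‖ + 1) * (u ⬝ᵥ u) := by rw [hnorm]; nlinarith [norm_nonneg v]

variable [DecidableEq n]

theorem exp_smul_mulVec_exp_smul_mulVec (M : Matrix n n ℝ) (s t : ℝ) (z : n → ℝ) :
    exp (s • M) *ᵥ (exp (t • M) *ᵥ z) = exp ((s + t) • M) *ᵥ z := by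
  rw [mulVec_mulVec, add_smul,
    Matrix.exp_add_of_commute _ _ (((Commute.refl M).smul_left s).smul_right t)]

theorem exp_smul_mulVec_ne_zero (M : Matrix n n ℝ) {z : n → ℝ} (hz : z ≠ 0) (t : ℝ) :
    exp (t • M) *ᵥ z ≠ 0 := by
  intro h
  apply hz
  simpa [h, eq_comm] using exp_smul_mulVec_exp_smul_mulVec M (-t) t z

open scoped Matrix.Norms.Operator in
theorem hasDerivAt_exp_smul_mulVec (M : Matrix n n ℝ) (z : n → ℝ) (t : ℝ) :
    HasDerivAt (fun s : ℝ => exp (s • M) *ᵥ z) (M *ᵥ (exp (t • M) *ᵥ z)) t := by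
  rw [mulVec_mulVec]
  exact ((mulVecBilin ℝ ℝ).flip z).toContinuousLinearMap.hasFDerivAt.comp_hasDerivAt t
    (hasDerivAt_exp_smul_const' (𝕂 := ℝ) M t)

theorem hasDerivAt_dotProduct_mulVec_exp_smul_mulVec (M P : Matrix n n ℝ) (z : n → ℝ) (t : ℝ) :
    HasDerivAt (fun s : ℝ => (exp (s • M) *ᵥ z) ⬝ᵥ P *ᵥ (exp (s • M) *ᵥ z))
      ((exp (t • M) *ᵥ z) ⬝ᵥ (P * M + Mᵀ * P) *ᵥ (exp (t • M) *ᵥ z)) t := by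
  have hy := hasDerivAt_exp_smul_mulVec M z t
  refine (hy.dotProduct (hy.matrix_mulVec P)).congr_deriv ?_
  rw [add_mulVec, dotProduct_add, add_comm, ← mulVec_mulVec, ← mulVec_mulVec,
    dotProduct_mulVec _ Mᵀ, vecMul_transpose]

theorem bijective_log_dotProduct_mulVec_exp_smul_mulVec {M P : Matrix n n ℝ}
    (hPpos : ∀ x : n → ℝ, x ≠ 0 → 0 < x ⬝ᵥ P *ᵥ x) (hLyap : P * M + Mᵀ * P = -1)
    {z : n → ℝ} (hz : z ≠ 0) :
    Function.Bijective fun t : ℝ =>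
      Real.log ((exp (t • M) *ᵥ z) ⬝ᵥ P *ᵥ (exp (t • M) *ᵥ z)) := by
  obtain ⟨C, hC, hle⟩ := exists_pos_dotProduct_mulVec_le P
  have hpos t := hPpos _ (exp_smul_mulVec_ne_zero M hz t)
  have hderiv t := (hasDerivAt_dotProduct_mulVec_exp_smul_mulVec M P z t).log (hpos t).ne'
  refine bijective_of_deriv_le_neg (fun t => (hderiv t).differentiableAt) (inv_pos.2 hC)
    fun t => ?_
  rw [(hderiv t).deriv, hLyap, neg_mulVec, one_mulVec, dotProduct_neg, neg_div, neg_le_neg_iff,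
    le_div_iff₀ (hpos t), inv_mul_le_iff₀ hC]
  exact hle _

end

theorem psi_bijective_general {N : ℕ} (M P : Matrix (Fin N) (Fin N) ℝ)
    (hPpos : ∀ x : Fin N → ℝ, x ≠ 0 → 0 < x ⬝ᵥ P.mulVec x)
    (hLyap : P * M + Mᵀ * P = -1) :
    Set.BijOn (fun p : ℝ × (Fin N → ℝ) => (exp (p.1 • M)).mulVec p.2)
      (Set.univ ×ˢ {x : Fin N → ℝ | x ⬝ᵥ P.mulVec x = 1})
      {z : Fin N → ℝ | z ≠ 0} := by
  have ne_zero_of_mem_sphere {x : Fin N → ℝ} (hx : x ⬝ᵥ P *ᵥ x = 1) : x ≠ 0 := by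
    rintro rfl
    simp at hx
  refine ⟨?_, ?_, ?_⟩
  · rintro ⟨t, x⟩ ⟨-, hx⟩
    exact exp_smul_mulVec_ne_zero M (ne_zero_of_mem_sphere hx) t
  · rintro ⟨t₁, x₁⟩ ⟨-, hx₁ : x₁ ⬝ᵥ P *ᵥ x₁ = 1⟩ ⟨t₂, x₂⟩ ⟨-, hx₂ : x₂ ⬝ᵥ P *ᵥ x₂ = 1⟩
      (heq : exp (t₁ • M) *ᵥ x₁ = exp (t₂ • M) *ᵥ x₂)
    have hx₂' : exp ((-t₂ + t₁) • M) *ᵥ x₁ = x₂ := by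
      rw [← exp_smul_mulVec_exp_smul_mulVec, heq, exp_smul_mulVec_exp_smul_mulVec]
      simp
    have ht : -t₂ + t₁ = 0 :=
      (bijective_log_dotProduct_mulVec_exp_smul_mulVec hPpos hLyap
        (ne_zero_of_mem_sphere hx₁)).injective (by simp [hx₂', hx₁, hx₂])
    rw [ht, zero_smul, exp_zero, one_mulVec] at hx₂'
    exact Prod.ext (by linarith) hx₂'
  · intro z (hz : z ≠ 0)
    obtain ⟨t, ht⟩ :=
      (bijective_log_dotProduct_mulVec_exp_smul_mulVec hPpos hLyap hz).surjective 0
    refine ⟨(-t, exp (t • M) *ᵥ z), ⟨mem_univ _, ?_⟩, ?_⟩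
    · show (exp (t • M) *ᵥ z) ⬝ᵥ P *ᵥ (exp (t • M) *ᵥ z) = 1
      rw [← Real.exp_log (hPpos _ (exp_smul_mulVec_ne_zero M hz t))]
      simp only at ht
      rw [ht, Real.exp_zero]
    · show exp ((-t) • M) *ᵥ (exp (t • M) *ᵥ z) = z
      rw [exp_smul_mulVec_exp_smul_mulVec, neg_add_cancel, zero_smul, exp_zero, one_mulVec]

/-- For `M` with all eigenvalues of negative real part and `P` the symmetric positive
definite solution of `P M + Mᵀ P = -I`, the map `ψ(t,x) = exp(tM)x` is a bijection
from `ℝ × S` onto `ℝ^N \ {0}`, where `S = {x : xᵀPx = 1}` is the Lyapunov unit sphere. -/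
theorem psi_bijective {N : ℕ} (M P : Matrix (Fin N) (Fin N) ℝ)
    (hM : ∀ μ ∈ spectrum ℂ (M.map (Complex.ofReal ·)), μ.re < 0)
    (hPsymm : Pᵀ = P)
    (hPpos : ∀ x : Fin N → ℝ, x ≠ 0 → 0 < x ⬝ᵥ P.mulVec x)
    (hLyap : P * M + Mᵀ * P = -1) :
    Set.BijOn (fun p : ℝ × (Fin N → ℝ) => (exp (p.1 • M)).mulVec p.2)
      (Set.univ ×ˢ {x : Fin N → ℝ | x ⬝ᵥ P.mulVec x = 1})
      {z : Fin N → ℝ | z ≠ 0} :=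
  psi_bijective_general M P hPpos hLyap
end

section
/- Let M be a real N×N matrix all of whose eigenvalues have negative real part, and let S be the unit sphere of the inner product determined by the Lyapunov solution P (i.e., S = {x : xᵀPx = 1}). Then ψ : ℝ × S → ℝ^N \ {0}, ψ(t,x) = exp(tM)x, is a diffeomorphism. -/
open Matrix NormedSpace Set Topology

namespace PsiLyap

variable {N : ℕ}

section Aux
attribute [local instance] Matrix.linftyOpSemiNormedRing Matrix.linftyOpNormedRing Matrix.linftyOpNormedAlgebra

noncomputable def mulVecCLM (z : Fin N → ℝ) : Matrix (Fin N) (Fin N) ℝ →L[ℝ] (Fin N → ℝ) :=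
  LinearMap.toContinuousLinearMap
    { toFun := fun A => A.mulVec z
      map_add' := fun A B => Matrix.add_mulVec A B z
      map_smul' := fun c A => Matrix.smul_mulVec c A z }

theorem expDeriv (M : Matrix (Fin N) (Fin N) ℝ) (z : Fin N → ℝ) (t : ℝ) :
    HasDerivAt (fun u : ℝ => (exp (u • M)).mulVec z) ((M * exp (t • M)).mulVec z) t := by
  have h := hasDerivAt_exp_smul_const' (𝕂 := ℝ) M t
  exact ((mulVecCLM z).hasFDerivAt.comp_hasDerivAt t h :)

noncomputable def toCLM : Matrix (Fin N) (Fin N) ℝ →L[ℝ] ((Fin N → ℝ) →L[ℝ] (Fin N → ℝ)) :=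
  LinearMap.toContinuousLinearMap
    { toFun := fun A => LinearMap.toContinuousLinearMap A.mulVecLin
      map_add' := fun A B => by ext v; simp [Matrix.add_mulVec]
      map_smul' := fun c A => by ext v; simp [Matrix.smul_mulVec] }

@[simp] theorem toCLM_apply (A : Matrix (Fin N) (Fin N) ℝ) (v : Fin N → ℝ) :
    toCLM A v = A.mulVec v := rfl

theorem contDiff_exp_smul (M : Matrix (Fin N) (Fin N) ℝ) :
    ContDiff ℝ (⊤ : ℕ∞) (fun t : ℝ => exp (t • M)) := by
  have h1 : ContDiff ℝ (⊤ : ℕ∞) (fun t : ℝ => t • M) := contDiff_id.smul contDiff_const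
  have h2 : AnalyticOnNhd ℝ (exp : Matrix (Fin N) (Fin N) ℝ → _) univ := fun x _ => exp_analytic (𝕂 := ℝ) x
  exact h2.contDiff.comp h1

theorem contDiff_psi (M : Matrix (Fin N) (Fin N) ℝ) :
    ContDiff ℝ (⊤ : ℕ∞) (fun p : ℝ × (Fin N → ℝ) => (exp (p.1 • M)).mulVec p.2) :=
  ((toCLM.contDiff.comp ((contDiff_exp_smul M).comp contDiff_fst)).clm_apply contDiff_snd :)

end Aux

-- group law, outside the normed section
theorem exp_add_smul (M : Matrix (Fin N) (Fin N) ℝ) (s t : ℝ) :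
    exp ((s + t) • M) = exp (s • M) * exp (t • M) := by
  rw [add_smul]
  exact Matrix.exp_add_of_commute _ _ ((Commute.refl M).smul_left s |>.smul_right t)

theorem exp_cancel (M : Matrix (Fin N) (Fin N) ℝ) (t : ℝ) (z : Fin N → ℝ) :
    (exp ((-t) • M)).mulVec ((exp (t • M)).mulVec z) = z := by
  rw [Matrix.mulVec_mulVec, ← exp_add_smul, neg_add_cancel, zero_smul, exp_zero,
    Matrix.one_mulVec]

theorem psi_ne_zero (M : Matrix (Fin N) (Fin N) ℝ) (t : ℝ) {z : Fin N → ℝ} (hz : z ≠ 0) :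
    (exp (t • M)).mulVec z ≠ 0 := by
  intro h
  apply hz
  rw [← exp_cancel M t z, h, Matrix.mulVec_zero]



variable {N : ℕ}

theorem hasDerivAt_coord {y : ℝ → (Fin N → ℝ)} {y' : Fin N → ℝ} {t : ℝ}
    (hy : HasDerivAt y y' t) (i : Fin N) :
    HasDerivAt (fun s => y s i) (y' i) t :=
  ((ContinuousLinearMap.proj (R := ℝ) (φ := fun _ : Fin N => ℝ) i).hasFDerivAt.comp_hasDerivAt t hy :)

theorem hasDerivAt_quad (P : Matrix (Fin N) (Fin N) ℝ) {y : ℝ → (Fin N → ℝ)} {y' : Fin N → ℝ}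
    {t : ℝ} (hy : HasDerivAt y y' t) :
    HasDerivAt (fun s => y s ⬝ᵥ P.mulVec (y s))
      (y' ⬝ᵥ P.mulVec (y t) + y t ⬝ᵥ P.mulVec y') t := by
  have key : ∀ i : Fin N, HasDerivAt (fun s => y s i * ∑ j, P i j * y s j)
      (y' i * ∑ j, P i j * y t j + y t i * ∑ j, P i j * y' j) t := by
    intro i
    exact (hasDerivAt_coord hy i).mul
      (HasDerivAt.fun_sum fun j _ => (hasDerivAt_coord hy j).const_mul (P i j))
  have hsum := HasDerivAt.fun_sum (fun i (_ : i ∈ Finset.univ) => key i)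
  have e1 : ∀ (v w : Fin N → ℝ), v ⬝ᵥ P.mulVec w = ∑ i, v i * ∑ j, P i j * w j := by
    intro v w; simp [dotProduct, Matrix.mulVec]
  have e2 : (fun s => y s ⬝ᵥ P.mulVec (y s)) = fun s => ∑ i, y s i * ∑ j, P i j * y s j :=
    funext fun s => e1 _ _
  rw [e2, e1, e1, ← Finset.sum_add_distrib]
  exact hsum

theorem lyap_algebra {M P : Matrix (Fin N) (Fin N) ℝ}
    (hLyap : P * M + Mᵀ * P = -1) (y : Fin N → ℝ) :
    M.mulVec y ⬝ᵥ P.mulVec y + y ⬝ᵥ P.mulVec (M.mulVec y) = -(y ⬝ᵥ y) := by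
  have h1 : M.mulVec y ⬝ᵥ P.mulVec y = y ⬝ᵥ (Mᵀ * P).mulVec y := by
    rw [dotProduct_comm, Matrix.dotProduct_mulVec, ← Matrix.mulVec_transpose,
      dotProduct_comm, ← Matrix.mulVec_mulVec]
  have h2 : y ⬝ᵥ P.mulVec (M.mulVec y) = y ⬝ᵥ (P * M).mulVec y := by
    rw [Matrix.mulVec_mulVec]
  rw [h1, h2, ← dotProduct_add, ← Matrix.add_mulVec, add_comm (Mᵀ * P) (P * M), hLyap,
    Matrix.neg_mulVec, Matrix.one_mulVec, dotProduct_neg]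

theorem dot_self_pos {y : Fin N → ℝ} (hy : y ≠ 0) : 0 < y ⬝ᵥ y := by
  obtain ⟨i, hi⟩ := Function.ne_iff.mp hy
  have : y i * y i ≤ y ⬝ᵥ y :=
    Finset.single_le_sum (f := fun j => y j * y j) (fun j _ => mul_self_nonneg (y j))
      (Finset.mem_univ i)
  exact lt_of_lt_of_le (mul_self_pos.mpr hi) this

theorem contDiff_quad (P : Matrix (Fin N) (Fin N) ℝ) :
    ContDiff ℝ (⊤ : ℕ∞) (fun y : Fin N → ℝ => y ⬝ᵥ P.mulVec y) := by
  have e1 : (fun y : Fin N → ℝ => y ⬝ᵥ P.mulVec y)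
      = fun y => ∑ i, y i * ∑ j, P i j * y j := by
    funext y; simp [dotProduct, Matrix.mulVec]
  rw [e1]
  exact ContDiff.sum fun i _ =>
    ((ContinuousLinearMap.proj (R := ℝ) (φ := fun _ : Fin N => ℝ) i).contDiff).mul
      (ContDiff.sum fun j _ =>
        ((ContinuousLinearMap.proj (R := ℝ) (φ := fun _ : Fin N => ℝ) j).contDiff).const_smul
          (P i j))

theorem quad_smul (P : Matrix (Fin N) (Fin N) ℝ) (c : ℝ) (y : Fin N → ℝ) :
    (c • y) ⬝ᵥ P.mulVec (c • y) = c * c * (y ⬝ᵥ P.mulVec y) := by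
  rw [Matrix.mulVec_smul, smul_dotProduct, dotProduct_smul]
  simp [smul_smul, mul_assoc]

theorem dot_smul_self (c : ℝ) (y : Fin N → ℝ) : (c • y) ⬝ᵥ (c • y) = c * c * (y ⬝ᵥ y) := by
  rw [smul_dotProduct, dotProduct_smul]
  simp [smul_smul, mul_assoc]

theorem exists_upper (P : Matrix (Fin N) (Fin N) ℝ)
    (hPpos : ∀ x : Fin N → ℝ, x ≠ 0 → 0 < x ⬝ᵥ P.mulVec x) :
    ∃ c : ℝ, 0 < c ∧ ∀ y : Fin N → ℝ, y ⬝ᵥ P.mulVec y ≤ c * (y ⬝ᵥ y) := by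
  rcases Nat.eq_zero_or_pos N with hN | hN
  · refine ⟨1, one_pos, fun y => ?_⟩
    subst hN
    simp [dotProduct]
  · set K : Set (Fin N → ℝ) := {y | y ⬝ᵥ y = 1} with hK
    have hcont : Continuous fun y : Fin N → ℝ => y ⬝ᵥ y := by
      have := (contDiff_quad (1 : Matrix (Fin N) (Fin N) ℝ)).continuous
      simpa using this
    have hVcont : Continuous fun y : Fin N → ℝ => y ⬝ᵥ P.mulVec y := (contDiff_quad P).continuous
    have hKclosed : IsClosed K := isClosed_eq hcont continuous_const
    have hKsub : K ⊆ Metric.closedBall 0 1 := by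
      intro y hy
      rw [Metric.mem_closedBall, dist_zero_right]
      refine (pi_norm_le_iff_of_nonneg zero_le_one).mpr fun i => ?_
      rw [Real.norm_eq_abs, abs_le_one_iff_mul_self_le_one]
      calc y i * y i ≤ y ⬝ᵥ y :=
            Finset.single_le_sum (f := fun j => y j * y j)
              (fun j _ => mul_self_nonneg (y j)) (Finset.mem_univ i)
        _ = 1 := hy
    have hKcomp : IsCompact K :=
      (isCompact_closedBall (0 : Fin N → ℝ) 1).of_isClosed_subset hKclosed hKsub
    have hKne : K.Nonempty := by
      refine ⟨Pi.single ⟨0, hN⟩ 1, ?_⟩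
      simp [hK, dotProduct, Pi.single_apply]
    obtain ⟨y₂, hy₂K, hy₂max⟩ := hKcomp.exists_isMaxOn hKne hVcont.continuousOn
    have hy₂ne : y₂ ≠ 0 := by
      intro h
      rw [hK, mem_setOf_eq, h] at hy₂K
      simp at hy₂K
    refine ⟨y₂ ⬝ᵥ P.mulVec y₂, hPpos y₂ hy₂ne, fun y => ?_⟩
    rcases eq_or_ne y 0 with rfl | hy
    · simp
    · have hq : 0 < y ⬝ᵥ y := dot_self_pos hy
      set r := Real.sqrt (y ⬝ᵥ y) with hr
      have hrpos : 0 < r := Real.sqrt_pos.mpr hq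
      have hrr : r * r = y ⬝ᵥ y := Real.mul_self_sqrt hq.le
      set u : Fin N → ℝ := r⁻¹ • y with hu
      have huK : u ∈ K := by
        rw [hK, mem_setOf_eq, hu, dot_smul_self]
        field_simp [hrr]
        rw [sq, hrr]
      have hyu : y = r • u := by
        rw [hu, smul_inv_smul₀ hrpos.ne']
      have h1 : y ⬝ᵥ P.mulVec y = (r * r) * (u ⬝ᵥ P.mulVec u) := by
        rw [hyu, quad_smul]
      have h2 : u ⬝ᵥ P.mulVec u ≤ y₂ ⬝ᵥ P.mulVec y₂ := hy₂max huK
      calc y ⬝ᵥ P.mulVec y = (r * r) * (u ⬝ᵥ P.mulVec u) := h1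
        _ ≤ (r * r) * (y₂ ⬝ᵥ P.mulVec y₂) := by
            exact mul_le_mul_of_nonneg_left h2 (mul_self_nonneg r)
        _ = (y₂ ⬝ᵥ P.mulVec y₂) * (y ⬝ᵥ y) := by rw [hrr]; ring



variable {N : ℕ}


theorem hasDerivAt_V_psi (M : Matrix (Fin N) (Fin N) ℝ) {P : Matrix (Fin N) (Fin N) ℝ}
    (hLyap : P * M + Mᵀ * P = -1) (z : Fin N → ℝ) (t : ℝ) :
    HasDerivAt (fun s => (exp (s • M)).mulVec z ⬝ᵥ P.mulVec ((exp (s • M)).mulVec z))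
      (-((exp (t • M)).mulVec z ⬝ᵥ (exp (t • M)).mulVec z)) t := by
  have hy : HasDerivAt (fun s => (exp (s • M)).mulVec z)
      (M.mulVec ((exp (t • M)).mulVec z)) t := by
    have := expDeriv M z t
    rwa [← Matrix.mulVec_mulVec] at this
  have h2 := hasDerivAt_quad P hy
  rwa [lyap_algebra hLyap] at h2

theorem exists_unique_time (M : Matrix (Fin N) (Fin N) ℝ) {P : Matrix (Fin N) (Fin N) ℝ}
    (hPpos : ∀ x : Fin N → ℝ, x ≠ 0 → 0 < x ⬝ᵥ P.mulVec x)
    (hLyap : P * M + Mᵀ * P = -1) {z : Fin N → ℝ} (hz : z ≠ 0) :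
    ∃! t : ℝ, (exp (t • M)).mulVec z ⬝ᵥ P.mulVec ((exp (t • M)).mulVec z) = 1 := by
  set ψ : ℝ → Fin N → ℝ := fun t => (exp (t • M)).mulVec z with hψ
  set h : ℝ → ℝ := fun t => ψ t ⬝ᵥ P.mulVec (ψ t) with hh
  have hψne : ∀ t, ψ t ≠ 0 := fun t => psi_ne_zero M t hz
  have hd : ∀ t, HasDerivAt h (-(ψ t ⬝ᵥ ψ t)) t := fun t => hasDerivAt_V_psi M hLyap z t
  have hdiff : Differentiable ℝ h := fun t => (hd t).differentiableAt
  have hcont : Continuous h := hdiff.continuous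
  have hstrict : StrictAnti h := by
    refine strictAnti_of_deriv_neg fun t => ?_
    rw [(hd t).deriv]
    exact neg_neg_iff_pos.mpr (dot_self_pos (hψne t))
  have h0pos : 0 < h 0 := by
    have : ψ 0 ≠ 0 := hψne 0
    exact hPpos _ this
  obtain ⟨c, hc, hcle⟩ := exists_upper P hPpos
  -- the auxiliary function u t = h t * exp (t / c) is antitone
  set u : ℝ → ℝ := fun t => h t * Real.exp (t / c) with hu
  have hud : ∀ t, HasDerivAt u (-(ψ t ⬝ᵥ ψ t) * Real.exp (t / c)
      + h t * (Real.exp (t / c) * c⁻¹)) t := by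
    intro t
    have h1 : HasDerivAt (fun t : ℝ => t / c) c⁻¹ t := by
      simpa [one_div] using (hasDerivAt_id t).div_const c
    have he : HasDerivAt (fun t : ℝ => Real.exp (t / c)) (Real.exp (t / c) * c⁻¹) t := by
      exact (Real.hasDerivAt_exp (t / c)).comp t h1
    exact (hd t).mul he
  have huanti : Antitone u := by
    refine antitone_of_deriv_nonpos (fun t => (hud t).differentiableAt) fun t => ?_
    rw [(hud t).deriv]
    have hb : h t ≤ c * (ψ t ⬝ᵥ ψ t) := hcle (ψ t)
    have hexp : 0 < Real.exp (t / c) := Real.exp_pos _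
    rw [mul_comm (Real.exp (t / c)) c⁻¹, ← mul_assoc]
    have hcinv : 0 < c⁻¹ := inv_pos.mpr hc
    have hc1 : c * c⁻¹ = 1 := mul_inv_cancel₀ hc.ne'
    have : h t * c⁻¹ ≤ ψ t ⬝ᵥ ψ t := by
      have h4 := mul_le_mul_of_nonneg_right hb hcinv.le
      calc h t * c⁻¹ ≤ c * (ψ t ⬝ᵥ ψ t) * c⁻¹ := h4
        _ = (ψ t ⬝ᵥ ψ t) * (c * c⁻¹) := by ring
        _ = ψ t ⬝ᵥ ψ t := by rw [hc1, mul_one]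
    nlinarith
  have hcomp : ∀ s t : ℝ, s ≤ t → h t * Real.exp (t / c) ≤ h s * Real.exp (s / c) :=
    fun s t hst => huanti hst
  have hhpos : ∀ t, 0 < h t := fun t => hPpos _ (hψne t)
  -- existence of a time where h < 1
  have hex1 : ∃ t₁, h t₁ < 1 := by
    rcases lt_or_ge (h 0) 1 with h01 | h01
    · exact ⟨0, h01⟩
    · have hlog : 0 ≤ Real.log (h 0) := Real.log_nonneg h01
      set t₁ : ℝ := c * Real.log (h 0) + c with ht₁
      have ht₁0 : (0:ℝ) ≤ t₁ := by positivity
      have hle := hcomp 0 t₁ ht₁0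
      have hexpt : Real.exp (t₁ / c) = h 0 * Real.exp 1 := by
        rw [ht₁]
        rw [show (c * Real.log (h 0) + c) / c = Real.log (h 0) + 1 by field_simp]
        rw [Real.exp_add, Real.exp_log h0pos]
      refine ⟨t₁, ?_⟩
      rw [hexpt] at hle
      simp only [zero_div, Real.exp_zero, mul_one] at hle
      have he1 : (1:ℝ) < Real.exp 1 := by
        have := Real.add_one_le_exp (1:ℝ)
        linarith
      have hinv : (Real.exp 1)⁻¹ < 1 := by
        have hcancel := mul_inv_cancel₀ (Real.exp_pos 1).ne'
        nlinarith [Real.exp_pos (1:ℝ)]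
      have hle2 : h t₁ ≤ (Real.exp 1)⁻¹ := by
        have hpos : (0:ℝ) < h 0 * Real.exp 1 := by positivity
        have h1 : h t₁ ≤ h 0 / (h 0 * Real.exp 1) := (le_div_iff₀ hpos).mpr hle
        calc h t₁ ≤ h 0 / (h 0 * Real.exp 1) := h1
          _ = (Real.exp 1)⁻¹ := by field_simp
      linarith
  -- existence of a time where h > 1
  have hex2 : ∃ t₂, 1 < h t₂ := by
    set t₂ : ℝ := min (c * Real.log (h 0) - c) 0 with ht₂
    have ht₂0 : t₂ ≤ 0 := min_le_right _ _
    have hlt : t₂ < c * Real.log (h 0) := by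
      rcases min_cases (c * Real.log (h 0) - c) 0 with ⟨hmin, _⟩ | ⟨hmin, hle0⟩
      · rw [ht₂, hmin]; linarith
      · rw [ht₂, hmin]; linarith
    have hle := hcomp t₂ 0 ht₂0
    simp only [zero_div, Real.exp_zero, mul_one] at hle
    have hexpos := Real.exp_pos (t₂ / c)
    have hkey : h 0 * Real.exp (-(t₂ / c)) ≤ h t₂ := by
      have h3 := mul_le_mul_of_nonneg_right hle (inv_pos.mpr hexpos).le
      rw [mul_assoc, mul_inv_cancel₀ hexpos.ne', mul_one] at h3
      rw [Real.exp_neg]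
      exact h3
    refine ⟨t₂, lt_of_lt_of_le ?_ hkey⟩
    have hmono : Real.exp (-Real.log (h 0)) < Real.exp (-(t₂ / c)) := by
      apply Real.exp_lt_exp.mpr
      rw [neg_lt_neg_iff]
      exact (div_lt_iff₀ hc).mpr (by linarith [hlt])
    have hexplog : Real.exp (-Real.log (h 0)) = (h 0)⁻¹ := by
      rw [Real.exp_neg, Real.exp_log h0pos]
    rw [hexplog] at hmono
    calc (1:ℝ) = h 0 * (h 0)⁻¹ := (mul_inv_cancel₀ h0pos.ne').symm
      _ < h 0 * Real.exp (-(t₂ / c)) := mul_lt_mul_of_pos_left hmono h0pos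
  obtain ⟨t₁, ht₁⟩ := hex1
  obtain ⟨t₂, ht₂⟩ := hex2
  have htlt : t₂ < t₁ := by
    by_contra hle
    push_neg at hle
    have := hstrict.antitone hle
    linarith
  have hIVT := intermediate_value_Icc' htlt.le hcont.continuousOn
  have h1mem : (1:ℝ) ∈ Icc (h t₁) (h t₂) := ⟨ht₁.le, ht₂.le⟩
  obtain ⟨t, _, ht⟩ := hIVT h1mem
  exact ⟨t, ht, fun t' ht' => hstrict.injective (ht'.trans ht.symm)⟩


variable {N : ℕ}


theorem contDiffAt_tau (M : Matrix (Fin N) (Fin N) ℝ) {P : Matrix (Fin N) (Fin N) ℝ}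
    (hPpos : ∀ x : Fin N → ℝ, x ≠ 0 → 0 < x ⬝ᵥ P.mulVec x)
    (hLyap : P * M + Mᵀ * P = -1) (τ : (Fin N → ℝ) → ℝ)
    (hτ : ∀ z : Fin N → ℝ, z ≠ 0 →
      (exp (τ z • M)).mulVec z ⬝ᵥ P.mulVec ((exp (τ z • M)).mulVec z) = 1)
    {z₀ : Fin N → ℝ} (hz₀ : z₀ ≠ 0) : ContDiffAt ℝ (⊤ : ℕ∞) τ z₀ := by
  classical
  have hn0 : ((⊤ : ℕ∞) : WithTop ℕ∞) ≠ 0 := by simp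
  set F : ℝ × (Fin N → ℝ) → ℝ := fun p =>
    (exp (p.1 • M)).mulVec p.2 ⬝ᵥ P.mulVec ((exp (p.1 • M)).mulVec p.2) with hF_def
  have hF : ContDiff ℝ (⊤ : ℕ∞) F := (contDiff_quad P).comp (contDiff_psi M)
  set p₀ : ℝ × (Fin N → ℝ) := (τ z₀, z₀) with hp₀
  set L₀ : (ℝ × (Fin N → ℝ)) →L[ℝ] ℝ := fderiv ℝ F p₀ with hL₀_def
  have hL₀ : HasFDerivAt F L₀ p₀ := ((hF.differentiable hn0) p₀).hasFDerivAt
  -- the t-partial derivative is negative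
  have hγ : HasDerivAt (fun t : ℝ => (t, z₀)) ((1:ℝ), (0:(Fin N → ℝ))) (τ z₀) :=
    (hasDerivAt_id _).prodMk (hasDerivAt_const _ _)
  have hcurve : HasDerivAt (fun t : ℝ => F (t, z₀)) (L₀ (1, 0)) (τ z₀) :=
    (hL₀.comp_hasDerivAt _ hγ :)
  have hderiv := hasDerivAt_V_psi M hLyap z₀ (τ z₀)
  have ha : L₀ (1, (0:(Fin N → ℝ))) =
      -((exp (τ z₀ • M)).mulVec z₀ ⬝ᵥ (exp (τ z₀ • M)).mulVec z₀) :=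
    hcurve.unique hderiv
  have haneg : L₀ (1, (0:(Fin N → ℝ))) < 0 := by
    rw [ha]
    exact neg_neg_iff_pos.mpr (dot_self_pos (psi_ne_zero M _ hz₀))
  set a : ℝ := L₀ (1, (0:(Fin N → ℝ))) with ha_def
  have ha0 : a ≠ 0 := haneg.ne
  have hL₀s : ∀ (s : ℝ) (w : (Fin N → ℝ)), L₀ (s, w) = s * a + L₀ (0, w) := by
    intro s w
    have hrw : (s, w) = s • ((1:ℝ), (0:(Fin N → ℝ))) + ((0:ℝ), w) := by
      ext <;> simp
    rw [hrw, map_add, L₀.map_smul, smul_eq_mul, ha_def]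
  -- the continuous linear equivalence
  set f₁ : (ℝ × (Fin N → ℝ)) →L[ℝ] (ℝ × (Fin N → ℝ)) := L₀.prod (ContinuousLinearMap.snd ℝ ℝ (Fin N → ℝ)) with hf₁
  set g₁ : (ℝ × (Fin N → ℝ)) →L[ℝ] (ℝ × (Fin N → ℝ)) :=
    (a⁻¹ • (ContinuousLinearMap.fst ℝ ℝ (Fin N → ℝ) -
      L₀.comp ((ContinuousLinearMap.inr ℝ ℝ (Fin N → ℝ)).comp (ContinuousLinearMap.snd ℝ ℝ (Fin N → ℝ))))).prod
      (ContinuousLinearMap.snd ℝ ℝ (Fin N → ℝ)) with hg₁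
  have happ_f : ∀ p : ℝ × (Fin N → ℝ), f₁ p = (L₀ p, p.2) := fun p => rfl
  have happ_g : ∀ p : ℝ × (Fin N → ℝ), g₁ p = (a⁻¹ * (p.1 - L₀ (0, p.2)), p.2) := fun p => rfl
  have h₁ : ∀ p : ℝ × (Fin N → ℝ), g₁ (f₁ p) = p := by
    rintro ⟨s, w⟩
    rw [happ_f, happ_g]
    simp only
    rw [hL₀s s w]
    ext
    · simp only
      field_simp
      ring
    · rfl
  have h₂ : ∀ p : ℝ × (Fin N → ℝ), f₁ (g₁ p) = p := by
    rintro ⟨v, w⟩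
    rw [happ_g, happ_f]
    simp only
    rw [hL₀s (a⁻¹ * (v - L₀ (0, w))) w]
    ext
    · simp only
      field_simp
      ring
    · rfl
  set e : (ℝ × (Fin N → ℝ)) ≃L[ℝ] (ℝ × (Fin N → ℝ)) := ContinuousLinearEquiv.equivOfInverse f₁ g₁ h₁ h₂ with he
  set G : ℝ × (Fin N → ℝ) → ℝ × (Fin N → ℝ) := fun p => (F p, p.2) with hG_def
  have hG : ContDiffAt ℝ (⊤ : ℕ∞) G p₀ := (hF.prodMk contDiff_snd).contDiffAt
  have hG' : HasFDerivAt G (e : (ℝ × (Fin N → ℝ)) →L[ℝ] (ℝ × (Fin N → ℝ))) p₀ := by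
    have : HasFDerivAt G f₁ p₀ := hL₀.prodMk (hasFDerivAt_snd)
    exact this
  have hGp₀ : G p₀ = ((1:ℝ), z₀) := by
    rw [hG_def]
    simp only
    rw [hF_def]
    exact Prod.ext (hτ z₀ hz₀) rfl
  have hinv : ContDiffAt ℝ (⊤ : ℕ∞) (hG.localInverse hG' hn0) (G p₀) :=
    hG.to_localInverse hG' hn0
  have hri : ∀ᶠ y in 𝓝 (G p₀), G (hG.localInverse hG' hn0 y) = y :=
    (hG.hasStrictFDerivAt' hG' hn0).eventually_right_inverse
  set inv : ℝ × (Fin N → ℝ) → ℝ × (Fin N → ℝ) := hG.localInverse hG' hn0 with hinv_def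
  have ht : Filter.Tendsto (fun z : (Fin N → ℝ) => ((1:ℝ), z)) (𝓝 z₀) (𝓝 (G p₀)) := by
    rw [hGp₀]
    exact (continuous_const.prodMk continuous_id).tendsto z₀
  have hev1 : ∀ᶠ z in 𝓝 z₀, G (inv (1, z)) = (1, z) := ht.eventually hri
  have hev2 : ∀ᶠ z in 𝓝 z₀, z ≠ 0 := by
    have : IsOpen {w : (Fin N → ℝ) | w ≠ 0} := isOpen_ne
    exact this.mem_nhds hz₀
  have hfinal : τ =ᶠ[𝓝 z₀] fun z => (inv (1, z)).1 := by
    filter_upwards [hev1, hev2] with z hGz hzne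
    have h2 : (inv (1, z)).2 = z := congrArg Prod.snd hGz
    have h1 : F (inv (1, z)) = 1 := congrArg Prod.fst hGz
    have h1' : F ((inv (1, z)).1, z) = 1 := by
      rw [show ((inv (1, z)).1, z) = inv (1, z) from Prod.ext rfl h2.symm]
      exact h1
    exact (exists_unique_time M hPpos hLyap hzne).unique (hτ z hzne) h1'
  rw [hGp₀] at hinv
  have hw : ContDiffAt ℝ (⊤ : ℕ∞) (fun z : (Fin N → ℝ) => inv (1, z)) z₀ :=
    hinv.comp z₀ (contDiffAt_const.prodMk contDiffAt_id)
  have hw1 : ContDiffAt ℝ (⊤ : ℕ∞) (fun z : (Fin N → ℝ) => (inv (1, z)).1) z₀ :=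
    (contDiff_fst.contDiffAt).comp z₀ hw
  exact hw1.congr_of_eventuallyEq hfinal

end PsiLyap

open Matrix NormedSpace Set

/-- For `M` with all eigenvalues of negative real part and `P` the symmetric positive
definite solution of `P M + Mᵀ P = -I`, the map `ψ(t,x) = exp(tM)x` is a
diffeomorphism from `ℝ × S` onto `ℝ^N \ {0}`, where `S = {x : xᵀPx = 1}`:
it is a smooth bijection with smooth inverse. -/
theorem psi_diffeomorphism {N : ℕ} (M P : Matrix (Fin N) (Fin N) ℝ)
    (hM : ∀ μ ∈ spectrum ℂ (M.map (Complex.ofReal ·)), μ.re < 0)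
    (hPsymm : Pᵀ = P)
    (hPpos : ∀ x : Fin N → ℝ, x ≠ 0 → 0 < x ⬝ᵥ P.mulVec x)
    (hLyap : P * M + Mᵀ * P = -1) :
    Set.BijOn (fun p : ℝ × (Fin N → ℝ) => (exp (p.1 • M)).mulVec p.2)
      (Set.univ ×ˢ {x : Fin N → ℝ | x ⬝ᵥ P.mulVec x = 1})
      {z : Fin N → ℝ | z ≠ 0} ∧
    ContDiff ℝ (⊤ : ℕ∞) (fun p : ℝ × (Fin N → ℝ) => (exp (p.1 • M)).mulVec p.2) ∧
    ∃ φ : (Fin N → ℝ) → ℝ × (Fin N → ℝ),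
      ContDiffOn ℝ (⊤ : ℕ∞) φ {z : Fin N → ℝ | z ≠ 0} ∧
      (∀ z : Fin N → ℝ, z ≠ 0 →
        φ z ∈ Set.univ ×ˢ {x : Fin N → ℝ | x ⬝ᵥ P.mulVec x = 1} ∧
        (exp ((φ z).1 • M)).mulVec (φ z).2 = z) ∧
      (∀ p ∈ Set.univ ×ˢ {x : Fin N → ℝ | x ⬝ᵥ P.mulVec x = 1},
        φ ((exp (p.1 • M)).mulVec p.2) = p) := by
  classical
  set S : Set (Fin N → ℝ) := {x | x ⬝ᵥ P.mulVec x = 1} with hS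
  have hτex : ∀ z : Fin N → ℝ, z ≠ 0 → ∃! t : ℝ,
      (exp (t • M)).mulVec z ⬝ᵥ P.mulVec ((exp (t • M)).mulVec z) = 1 :=
    fun z hz => PsiLyap.exists_unique_time M hPpos hLyap hz
  set τ : (Fin N → ℝ) → ℝ :=
    fun z => if hz : z ≠ 0 then (hτex z hz).exists.choose else 0 with hτdef
  have hτ1 : ∀ z : Fin N → ℝ, z ≠ 0 →
      (exp (τ z • M)).mulVec z ⬝ᵥ P.mulVec ((exp (τ z • M)).mulVec z) = 1 := by
    intro z hz
    have : τ z = (hτex z hz).exists.choose := by rw [hτdef]; simp only [dif_pos hz]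
    rw [this]
    exact (hτex z hz).exists.choose_spec
  have hτuniq : ∀ z : Fin N → ℝ, z ≠ 0 → ∀ t : ℝ,
      (exp (t • M)).mulVec z ⬝ᵥ P.mulVec ((exp (t • M)).mulVec z) = 1 → t = τ z :=
    fun z hz t ht => (hτex z hz).unique ht (hτ1 z hz)
  set φ : (Fin N → ℝ) → ℝ × (Fin N → ℝ) :=
    fun z => (-(τ z), (exp (τ z • M)).mulVec z) with hφdef
  have hSne : ∀ x : Fin N → ℝ, x ∈ S → x ≠ 0 := by
    intro x hx h0
    rw [hS, mem_setOf_eq, h0] at hx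
    simp at hx
  have hprop : ∀ z : Fin N → ℝ, z ≠ 0 →
      φ z ∈ Set.univ ×ˢ S ∧ (exp ((φ z).1 • M)).mulVec (φ z).2 = z := by
    intro z hz
    refine ⟨mem_prod.mpr ⟨mem_univ _, hτ1 z hz⟩, ?_⟩
    show (exp ((-(τ z)) • M)).mulVec ((exp (τ z • M)).mulVec z) = z
    exact PsiLyap.exp_cancel M (τ z) z
  have hleft : ∀ p ∈ Set.univ ×ˢ S, φ ((exp (p.1 • M)).mulVec p.2) = p := by
    rintro ⟨t, x⟩ ⟨-, hx⟩
    have hxne : x ≠ 0 := hSne x hx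
    have hzne : (exp (t • M)).mulVec x ≠ 0 := PsiLyap.psi_ne_zero M t hxne
    have hcancel : (exp ((-t) • M)).mulVec ((exp (t • M)).mulVec x) = x :=
      PsiLyap.exp_cancel M t x
    have h1 : (exp ((-t) • M)).mulVec ((exp (t • M)).mulVec x) ⬝ᵥ
        P.mulVec ((exp ((-t) • M)).mulVec ((exp (t • M)).mulVec x)) = 1 := by
      rw [hcancel]; exact hx
    have hτz : -t = τ ((exp (t • M)).mulVec x) := hτuniq _ hzne (-t) h1
    show (-(τ ((exp (t • M)).mulVec x)),
      (exp (τ ((exp (t • M)).mulVec x) • M)).mulVec ((exp (t • M)).mulVec x)) = (t, x)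
    rw [← hτz, neg_neg, hcancel]
  refine ⟨⟨?_, ?_, ?_⟩, PsiLyap.contDiff_psi M, φ, ?_, hprop, hleft⟩
  · rintro ⟨t, x⟩ ⟨-, hx⟩
    exact PsiLyap.psi_ne_zero M t (hSne x hx)
  · rintro p hp q hq hpq
    calc p = φ ((exp (p.1 • M)).mulVec p.2) := (hleft p hp).symm
      _ = φ ((exp (q.1 • M)).mulVec q.2) := congrArg φ hpq
      _ = q := hleft q hq
  · intro z hz
    obtain ⟨hmem, heq⟩ := hprop z hz
    exact ⟨φ z, hmem, heq⟩
  · intro z hz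
    have hzne : z ≠ 0 := hz
    have hτc : ContDiffAt ℝ (⊤ : ℕ∞) τ z :=
      PsiLyap.contDiffAt_tau M hPpos hLyap τ (fun w hw => hτ1 w hw) hzne
    have h1 : ContDiffAt ℝ (⊤ : ℕ∞) (fun w => (-(τ w), (exp (τ w • M)).mulVec w)) z := by
      refine ContDiffAt.prodMk hτc.neg ?_
      exact ((PsiLyap.contDiff_psi M).contDiffAt.comp z (hτc.prodMk contDiffAt_id) :)
    exact h1.contDiffWithinAt
end

section
/- Let A : ℝ → GL(N,ℝ) be a faithful closed continuous homomorphism with no eigenvalue of A(t), t ≠ 0, of modulus 1. If there exist σ ∈ GL(N,ℝ) and h > 0 such that σ A(h) σ⁻¹ ∈ SL(N,ℤ), then the subgroup σ⁻¹ℤ^N ⋊_A hℤ = {(σ⁻¹p, hn) : p ∈ ℤ^N, n ∈ ℤ} is a discrete cocompact subgroup (lattice) of ℝ^N ⋊_A ℝ. -/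
/-! Conjugation by `σ` turns `A(hn)` into `(σ A(h) σ⁻¹)ⁿ`, an integer matrix with integer
inverse, so `A(hℤ)` preserves `σ⁻¹ℤ^N` and the set is closed under the group law. The map
`(v, t) ↦ (σv, t/h)` carries it onto `ℤ^N × ℤ`, whence discreteness. For cocompactness, a point
`(b, t)` is reduced with `n = ⌊t/h⌋` in the `ℝ`-factor and then with the integer parts of
`σ A(-hn) b`, leaving a point of `σ⁻¹[0,1]^N × [0,h]`. -/

open Matrix NormedSpace

/-- Multiplication of the semidirect product `G = ℝ^N ⋊_A ℝ`, `A(t) = exp(tM)`. -/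
noncomputable def gmul {N : ℕ} (M : Matrix (Fin N) (Fin N) ℝ)
    (g h : (Fin N → ℝ) × ℝ) : (Fin N → ℝ) × ℝ :=
  (g.1 + (exp (g.2 • M)).mulVec h.1, g.2 + h.2)

/-- Inverse in the semidirect product `G = ℝ^N ⋊_A ℝ`. -/
noncomputable def ginv {N : ℕ} (M : Matrix (Fin N) (Fin N) ℝ)
    (g : (Fin N → ℝ) × ℝ) : (Fin N → ℝ) × ℝ :=
  (-(exp ((-g.2) • M)).mulVec g.1, -g.2)

theorem Matrix.map_zpow_of_isUnit_det {ι R S : Type*} [Fintype ι] [DecidableEq ι]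
    [CommRing R] [CommRing S] (f : R →+* S) {A : Matrix ι ι R} (hA : IsUnit A.det) (n : ℤ) :
    (A ^ n).map f = A.map f ^ n := by
  obtain ⟨u, rfl⟩ := (isUnit_iff_isUnit_det A).mpr hA
  change _ = (Units.map f.mapMatrix.toMonoidHom u : Matrix ι ι S) ^ n
  rw [← coe_units_zpow, ← coe_units_zpow, ← map_zpow]
  rfl

theorem Int.eq_of_dist_cast_lt_one {m n : ℤ} (hmn : dist (m : ℝ) n < 1) : m = n := by
  by_contra hne
  rw [Int.dist_cast_real] at hmn
  exact (Int.pairwise_one_le_dist hne).not_gt hmn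

theorem Int.eq_of_dist_pi_cast_lt_one {ι : Type*} [Fintype ι] {p q : ι → ℤ}
    (hpq : dist (fun i => (p i : ℝ)) (fun i => (q i : ℝ)) < 1) : p = q :=
  funext fun i => Int.eq_of_dist_cast_lt_one ((dist_le_pi_dist _ _ i).trans_lt hpq)

section

variable {N : ℕ} (M σ : Matrix (Fin N) (Fin N) ℝ) {B : Matrix (Fin N) (Fin N) ℤ} {h : ℝ}

theorem exp_add_smul (s t : ℝ) : exp ((s + t) • M) = exp (s • M) * exp (t • M) := by
  rw [add_smul]
  exact exp_add_of_commute _ _ (((Commute.refl M).smul_left s).smul_right t)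

variable {M σ}

theorem conj_exp_intCast_mul_smul (hσ : IsUnit σ.det) (hB : IsUnit B.det)
    (hBσ : B.map (fun k => (k : ℝ)) = σ * exp (h • M) * σ⁻¹) (n : ℤ) :
    σ * exp ((h * n) • M) * σ⁻¹ = (B ^ n).map (fun k => (k : ℝ)) := by
  have hσ' : IsUnit σ := (isUnit_iff_isUnit_det σ).mpr hσ
  have hsmul : (h * n) • M = (n : ℤ) • (h • M) := by
    rw [mul_comm, mul_smul, Int.cast_smul_eq_zsmul]
  rw [← exp_conj _ _ hσ', hsmul, Matrix.mul_smul, Matrix.smul_mul, Matrix.exp_zsmul,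
    exp_conj _ _ hσ', ← hBσ]
  exact (Matrix.map_zpow_of_isUnit_det (Int.castRingHom ℝ) hB n).symm

theorem exp_intCast_mul_smul_mulVec (hσ : IsUnit σ.det) (hB : IsUnit B.det)
    (hBσ : B.map (fun k => (k : ℝ)) = σ * exp (h • M) * σ⁻¹) (n : ℤ) (p : Fin N → ℤ) :
    exp ((h * n) • M) *ᵥ (σ⁻¹ *ᵥ fun i => (p i : ℝ)) = σ⁻¹ *ᵥ fun i => ((B ^ n *ᵥ p) i : ℝ) := by
  have hcomm : exp ((h * n) • M) * σ⁻¹ = σ⁻¹ * (B ^ n).map (fun k => (k : ℝ)) := by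
    rw [← conj_exp_intCast_mul_smul hσ hB hBσ, ← Matrix.mul_assoc, ← Matrix.mul_assoc,
      nonsing_inv_mul σ hσ, Matrix.one_mul]
  rw [mulVec_mulVec, hcomm, ← mulVec_mulVec]
  congr 1
  funext i
  exact ((Int.castRingHom ℝ).map_mulVec _ p i).symm

variable (σ h) in
def semidirectLattice : Set ((Fin N → ℝ) × ℝ) :=
  {g | ∃ (p : Fin N → ℤ) (n : ℤ), g = (σ⁻¹.mulVec (fun i => (p i : ℝ)), h * n)}

theorem zero_mem_semidirectLattice : ((0 : Fin N → ℝ), (0 : ℝ)) ∈ semidirectLattice σ h :=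
  ⟨0, 0, by simp [← Pi.zero_def]⟩

theorem gmul_mem_semidirectLattice (hσ : IsUnit σ.det) (hB : IsUnit B.det)
    (hBσ : B.map (fun k => (k : ℝ)) = σ * exp (h • M) * σ⁻¹) {g₁ g₂ : (Fin N → ℝ) × ℝ}
    (hg₁ : g₁ ∈ semidirectLattice σ h) (hg₂ : g₂ ∈ semidirectLattice σ h) :
    gmul M g₁ g₂ ∈ semidirectLattice σ h := by
  obtain ⟨p₁, n₁, rfl⟩ := hg₁
  obtain ⟨p₂, n₂, rfl⟩ := hg₂
  refine ⟨p₁ + B ^ n₁ *ᵥ p₂, n₁ + n₂, ?_⟩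
  simp only [gmul, exp_intCast_mul_smul_mulVec hσ hB hBσ, ← mulVec_add, Prod.mk.injEq]
  constructor
  · congr 1
    funext i
    simp only [Pi.add_apply, Int.cast_add]
  · push_cast
    ring

theorem ginv_mem_semidirectLattice (hσ : IsUnit σ.det) (hB : IsUnit B.det)
    (hBσ : B.map (fun k => (k : ℝ)) = σ * exp (h • M) * σ⁻¹) {g : (Fin N → ℝ) × ℝ}
    (hg : g ∈ semidirectLattice σ h) : ginv M g ∈ semidirectLattice σ h := by
  obtain ⟨p, n, rfl⟩ := hg
  refine ⟨B ^ (-n) *ᵥ -p, -n, ?_⟩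
  have hneg : -(h * n) = h * ((-n : ℤ) : ℝ) := by push_cast; ring
  simp only [ginv, hneg, exp_intCast_mul_smul_mulVec hσ hB hBσ, ← mulVec_neg, Prod.mk.injEq,
    and_true]
  congr 1
  funext i
  simp only [Pi.neg_apply, mulVec_neg, Int.cast_neg]

theorem exists_isOpen_inter_semidirectLattice_eq_singleton (hσ : IsUnit σ.det) (hh : h ≠ 0)
    {x : (Fin N → ℝ) × ℝ} (hx : x ∈ semidirectLattice σ h) :
    ∃ U : Set ((Fin N → ℝ) × ℝ), IsOpen U ∧ x ∈ U ∧ U ∩ semidirectLattice σ h = {x} := by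
  obtain ⟨p, n, rfl⟩ := hx
  let Φ : (Fin N → ℝ) × ℝ → (Fin N → ℝ) × ℝ := fun y => (σ *ᵥ y.1, y.2 / h)
  have hΦ (p : Fin N → ℤ) (n : ℤ) :
      Φ (σ⁻¹ *ᵥ (fun i => (p i : ℝ)), h * n) = (fun i => (p i : ℝ), (n : ℝ)) := by
    simp only [Φ, mulVec_mulVec, mul_nonsing_inv σ hσ, one_mulVec, mul_div_cancel_left₀ _ hh]
  refine ⟨Φ ⁻¹' Metric.ball (fun i => (p i : ℝ), (n : ℝ)) 1,
    Metric.isOpen_ball.preimage (by fun_prop), by simp [hΦ], ?_⟩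
  refine Set.Subset.antisymm ?_ (Set.singleton_subset_iff.2 ⟨by simp [hΦ], p, n, rfl⟩)
  rintro _ ⟨hy, p', n', rfl⟩
  rw [Set.mem_preimage, hΦ, Metric.mem_ball, Prod.dist_eq, max_lt_iff] at hy
  rw [Int.eq_of_dist_pi_cast_lt_one hy.1, Int.eq_of_dist_cast_lt_one hy.2]
  rfl

theorem exists_isCompact_gmul_semidirectLattice (hσ : IsUnit σ.det) (hB : IsUnit B.det)
    (hBσ : B.map (fun k => (k : ℝ)) = σ * exp (h • M) * σ⁻¹) (hh : 0 < h) :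
    ∃ K : Set ((Fin N → ℝ) × ℝ), IsCompact K ∧
      ∀ g : (Fin N → ℝ) × ℝ, ∃ l ∈ semidirectLattice σ h, ∃ k ∈ K, g = gmul M l k := by
  refine ⟨((σ⁻¹ *ᵥ ·) '' Set.Icc 0 1) ×ˢ Set.Icc 0 h,
    (isCompact_Icc.image (by fun_prop)).prod isCompact_Icc, ?_⟩
  rintro ⟨b, t⟩
  set n : ℤ := ⌊t / h⌋
  set w : Fin N → ℝ := σ *ᵥ exp ((-(h * n)) • M) *ᵥ b
  set q : Fin N → ℤ := fun i => ⌊w i⌋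
  have hn : h * n ≤ t ∧ t ≤ h * n + h := by
    constructor
    · rw [mul_comm, ← le_div_iff₀ hh]
      exact Int.floor_le _
    · rw [← mul_add_one, mul_comm, ← div_le_iff₀ hh]
      exact (Int.lt_floor_add_one _).le
  refine ⟨_, ⟨B ^ n *ᵥ q, n, rfl⟩, (σ⁻¹ *ᵥ fun i => Int.fract (w i), t - h * n),
    ⟨⟨_, ⟨fun i => Int.fract_nonneg _, fun i => (Int.fract_lt_one _).le⟩, rfl⟩,
      by constructor <;> linarith⟩, ?_⟩
  have hinv : exp ((h * n) • M) * exp ((-(h * n)) • M) = 1 := by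
    rw [← exp_add_smul, add_neg_cancel, zero_smul, exp_zero]
  refine Prod.ext ?_ (by simp [gmul])
  calc b = exp ((h * n) • M) *ᵥ σ⁻¹ *ᵥ w := by
        simp only [w, mulVec_mulVec, nonsing_inv_mul_cancel_left σ _ hσ, hinv, one_mulVec]
    _ = exp ((h * n) • M) *ᵥ σ⁻¹ *ᵥ (fun i => (q i : ℝ))
          + exp ((h * n) • M) *ᵥ σ⁻¹ *ᵥ (fun i => Int.fract (w i)) := by
        rw [← mulVec_add, ← mulVec_add]
        congr 2
        funext i
        exact (Int.floor_add_fract (w i)).symm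
    _ = _ := by rw [exp_intCast_mul_smul_mulVec hσ hB hBσ]; rfl

end

theorem lattice_criterion_general {N : ℕ} (M : Matrix (Fin N) (Fin N) ℝ)
    (σ : Matrix (Fin N) (Fin N) ℝ) (hσ : IsUnit σ.det)
    (h : ℝ) (hh : 0 < h)
    (hB : ∃ Bz : Matrix (Fin N) (Fin N) ℤ, Bz.det = 1 ∧
      Bz.map (fun k => (k : ℝ)) = σ * exp (h • M) * σ⁻¹) :
    -- the set `σ⁻¹ℤ^N ⋊_A hℤ`
    let L : Set ((Fin N → ℝ) × ℝ) :=
      {g | ∃ (p : Fin N → ℤ) (n : ℤ), g = (σ⁻¹.mulVec (fun i => (p i : ℝ)), h * n)}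
    -- it is a subgroup:
    (((0 : Fin N → ℝ), (0 : ℝ)) ∈ L ∧
      (∀ g₁ ∈ L, ∀ g₂ ∈ L, gmul M g₁ g₂ ∈ L) ∧
      (∀ g ∈ L, ginv M g ∈ L)) ∧
    -- it is discrete:
    (∀ x ∈ L, ∃ U : Set ((Fin N → ℝ) × ℝ), IsOpen U ∧ x ∈ U ∧ U ∩ L = {x}) ∧
    -- it is cocompact:
    (∃ K : Set ((Fin N → ℝ) × ℝ), IsCompact K ∧
      ∀ g : (Fin N → ℝ) × ℝ, ∃ l ∈ L, ∃ k ∈ K, g = gmul M l k) := by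
  obtain ⟨B, hdet, hBσ⟩ := hB
  have hB : IsUnit B.det := hdet ▸ isUnit_one
  exact ⟨⟨zero_mem_semidirectLattice,
      fun _ hg₁ _ hg₂ => gmul_mem_semidirectLattice hσ hB hBσ hg₁ hg₂,
      fun _ hg => ginv_mem_semidirectLattice hσ hB hBσ hg⟩,
    fun _ hx => exists_isOpen_inter_semidirectLattice_eq_singleton hσ hh.ne' hx,
    exists_isCompact_gmul_semidirectLattice hσ hB hBσ hh⟩

/-- If `A(t) = exp(tM)` is a faithful closed one-parameter group with no eigenvalue of
`A(t)`, `t ≠ 0`, of modulus `1`, and `σ A(h) σ⁻¹ ∈ SL(N,ℤ)` for some `σ ∈ GL(N,ℝ)` and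
`h > 0`, then `σ⁻¹ℤ^N ⋊_A hℤ` is a discrete cocompact subgroup (a lattice) of
`ℝ^N ⋊_A ℝ`. -/
theorem lattice_criterion {N : ℕ} (M : Matrix (Fin N) (Fin N) ℝ)
    (hfaithful : Function.Injective (fun t : ℝ => exp (t • M)))
    (hclosed : IsClosed (Set.range (fun t : ℝ => exp (t • M))))
    (heig : ∀ t : ℝ, t ≠ 0 →
      ∀ μ ∈ spectrum ℂ ((exp (t • M)).map (Complex.ofReal ·)), ‖μ‖ ≠ 1)
    (σ : Matrix (Fin N) (Fin N) ℝ) (hσ : IsUnit σ.det)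
    (h : ℝ) (hh : 0 < h)
    (hB : ∃ Bz : Matrix (Fin N) (Fin N) ℤ, Bz.det = 1 ∧
      Bz.map (fun k => (k : ℝ)) = σ * exp (h • M) * σ⁻¹) :
    -- the set `σ⁻¹ℤ^N ⋊_A hℤ`
    let L : Set ((Fin N → ℝ) × ℝ) :=
      {g | ∃ (p : Fin N → ℤ) (n : ℤ), g = (σ⁻¹.mulVec (fun i => (p i : ℝ)), h * n)}
    -- it is a subgroup:
    (((0 : Fin N → ℝ), (0 : ℝ)) ∈ L ∧
      (∀ g₁ ∈ L, ∀ g₂ ∈ L, gmul M g₁ g₂ ∈ L) ∧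
      (∀ g ∈ L, ginv M g ∈ L)) ∧
    -- it is discrete:
    (∀ x ∈ L, ∃ U : Set ((Fin N → ℝ) × ℝ), IsOpen U ∧ x ∈ U ∧ U ∩ L = {x}) ∧
    -- it is cocompact:
    (∃ K : Set ((Fin N → ℝ) × ℝ), IsCompact K ∧
      ∀ g : (Fin N → ℝ) × ℝ, ∃ l ∈ L, ∃ k ∈ K, g = gmul M l k) :=
  lattice_criterion_general M σ hσ h hh hB
end

section
/- Let B ∈ GL(N,ℝ) have no eigenvalue of modulus 1 and let E^s, E^u be its stable and unstable subspaces. Consider the affine action of Γ = ℤ^N ⋊_B ℤ on ℂ^N given by ((b,n), z) ↦ Bⁿz + b. If U ⊆ ℂ^N is a Γ-invariant open set on which the Γ-action is properly discontinuous, and additionally for almost every real point orbits are dense in ℝ^N (as holds when B ∈ SL(N,ℤ) is a hyperbolic toral automorphism), then U ⊆ U⁺ or U ⊆ U⁻, where U⁻ = {z : the E^s-component of Im z ≠ 0} and U⁺ = {z : the E^u-component of Im z ≠ 0}. -/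
open Matrix Filter MeasureTheory

/-- Integer power of a matrix, using the nonsingular inverse for negative exponents. -/
noncomputable def mzpow {N : ℕ} (A : Matrix (Fin N) (Fin N) ℝ) : ℤ → Matrix (Fin N) (Fin N) ℝ
  | (Int.ofNat n) => A ^ n
  | (Int.negSucc n) => A⁻¹ ^ (n + 1)

/-- Complexification of a real vector. -/
def cvec {N : ℕ} (v : Fin N → ℝ) : Fin N → ℂ := fun i => (v i : ℂ)

/-- The affine action of `ℤ^N ⋊_B ℤ` on `ℂ^N`: `((b,n), z) ↦ Bⁿz + b`. -/
noncomputable def discAct {N : ℕ} (B : Matrix (Fin N) (Fin N) ℝ)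
    (g : (Fin N → ℤ) × ℤ) (z : Fin N → ℂ) : Fin N → ℂ :=
  ((mzpow B g.2).map (Complex.ofReal ·)).mulVec z + cvec (fun i => (g.1 i : ℝ))

/-- The stable subspace of `B`: points with forward iterates tending to `0`. -/
def stableSetD {N : ℕ} (B : Matrix (Fin N) (Fin N) ℝ) : Set (Fin N → ℝ) :=
  {x | Tendsto (fun n : ℕ => (B ^ n).mulVec x) atTop (nhds 0)}

/-- The unstable subspace of `B`: points with backward iterates tending to `0`. -/
def unstableSetD {N : ℕ} (B : Matrix (Fin N) (Fin N) ℝ) : Set (Fin N → ℝ) :=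
  {x | Tendsto (fun n : ℕ => (B⁻¹ ^ n).mulVec x) atTop (nhds 0)}

/-- `U⁻`: points of `ℂ^N` whose imaginary part has nonzero stable component. -/
def UminusD {N : ℕ} (B : Matrix (Fin N) (Fin N) ℝ) : Set (Fin N → ℂ) :=
  {z | ∃ ys ∈ stableSetD B, ∃ yu ∈ unstableSetD B,
    (fun i => (z i).im) = ys + yu ∧ ys ≠ 0}

/-- `U⁺`: points of `ℂ^N` whose imaginary part has nonzero unstable component. -/
def UplusD {N : ℕ} (B : Matrix (Fin N) (Fin N) ℝ) : Set (Fin N → ℂ) :=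
  {z | ∃ ys ∈ stableSetD B, ∃ yu ∈ unstableSetD B,
    (fun i => (z i).im) = ys + yu ∧ yu ≠ 0}

/-! Write points of `ℂ^N` as `x + i y` with `x, y ∈ ℝ^N`; then `(b, n)` acts by
`x + i y ↦ (Bⁿx + b) + i Bⁿy`, and `ℝ^N = E^s ⊕ E^u` by the generalized eigenspace decomposition
of `B` over `ℂ`. If `U` is contained in neither `U⁺` nor `U⁻`, it contains points with purely
stable and with purely unstable imaginary part; moving one of them by the group and using that
almost every orbit is dense, we find a real point `x` with dense orbit such that both `x + i y_s`
and `x + i y_u` lie in `U`, with `y_s ∈ E^s` and `y_u ∈ E^u`.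
Infinitely many `(b, n)` then have `Bⁿx + b` close to `x`. For `n ≫ 0` such an element moves
`x + i (y_s + B⁻ⁿy_u)`, close to `x + i y_s`, to `(Bⁿx + b) + i (Bⁿy_s + y_u)`, close to
`x + i y_u`; for `n ≪ 0` the roles of `y_s` and `y_u` are exchanged. So infinitely many group
elements move a compact neighbourhood of these two points inside `U` into itself. -/

open Topology

section

open Finset

variable {R M : Type*} [CommRing R] [AddCommGroup M] [Module R M]

lemma pow_apply_eq_sum_of_pow_sub_smul_apply_eq_zero {f : Module.End R M} {μ : R} {k : ℕ}
    {v : M} (hv : ((f - μ • 1) ^ k) v = 0) (n : ℕ) :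
    (f ^ n) v = ∑ m ∈ range k, ((n.choose m : R) * μ ^ (n - m)) • ((f - μ • 1) ^ m) v := by
  set g := f - μ • 1
  have hterm : ∀ m, ((g ^ m * (μ • 1) ^ (n - m) * (n.choose m : Module.End R M)) v) =
      ((n.choose m : R) * μ ^ (n - m)) • (g ^ m) v := fun m => by
    simp [smul_pow, mul_smul, Nat.cast_smul_eq_nsmul, smul_comm (μ ^ (n - m))]
  have hvanish : ∀ m, (k ≤ m ∨ n < m) → ((n.choose m : R) * μ ^ (n - m)) • (g ^ m) v = 0 := by
    rintro m (hm | hm)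
    · rw [← Nat.sub_add_cancel hm, pow_add, Module.End.mul_apply, hv, map_zero, smul_zero]
    · rw [Nat.choose_eq_zero_of_lt hm, Nat.cast_zero, zero_mul, zero_smul]
  calc (f ^ n) v = ∑ m ∈ range (n + 1), ((n.choose m : R) * μ ^ (n - m)) • (g ^ m) v := by
        rw [← sub_add_cancel f (μ • 1), ((Commute.one_right g).smul_right μ).add_pow,
          LinearMap.sum_apply]
        exact sum_congr rfl fun m _ => hterm m
    _ = ∑ m ∈ range (n + 1 + k), ((n.choose m : R) * μ ^ (n - m)) • (g ^ m) v :=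
        sum_subset (range_mono (by omega)) fun m _ hm => hvanish m (.inr (by simp at hm; omega))
    _ = _ := (sum_subset (range_mono (by omega)) fun m _ hm =>
        hvanish m (.inl (by simp at hm; omega))).symm

end

lemma Module.End.maxGenEigenspace_le_maxGenEigenspace_inv {K M : Type*} [Field K]
    [AddCommGroup M] [Module K M] {f f' : Module.End K M} (h : f' * f = 1) (h' : f * f' = 1)
    {μ : K} (hμ : μ ≠ 0) : f.maxGenEigenspace μ ≤ f'.maxGenEigenspace μ⁻¹ := by
  intro v hv
  obtain ⟨k, hk⟩ := (f.mem_maxGenEigenspace μ v).1 hv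
  refine (f'.mem_maxGenEigenspace _ v).2 ⟨k, ?_⟩
  have hcomm : Commute f' (f - μ • 1) :=
    (show Commute f' f from h.trans h'.symm).sub_right ((Commute.one_right f').smul_right μ)
  have hfactor : f' - μ⁻¹ • 1 = (-μ⁻¹) • (f' * (f - μ • 1)) := by
    rw [mul_sub, h, mul_smul_comm, mul_one, smul_sub, smul_smul, neg_mul, inv_mul_cancel₀ hμ]
    module
  rw [hfactor, smul_pow, hcomm.mul_pow, LinearMap.smul_apply, Module.End.mul_apply, hk, map_zero,
    smul_zero]

lemma tendsto_choose_mul_pow_sub {R : Type*} [NormedRing R] [HasSummableGeomSeries R] (m : ℕ)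
    {r : R} (hr : ‖r‖ < 1) : Tendsto (fun n => (n.choose m : R) * r ^ (n - m)) atTop (𝓝 0) := by
  rw [← tendsto_add_atTop_iff_nat m]
  simpa using (summable_choose_mul_geometric_of_norm_lt_one m hr).tendsto_atTop_zero

section

variable {𝕜 V : Type*} [NormedField 𝕜] [NormedAddCommGroup V] [NormedSpace 𝕜 V]

def contractingSubmodule (f : Module.End 𝕜 V) : Submodule 𝕜 V where
  carrier := {v | Tendsto (fun n : ℕ => (f ^ n) v) atTop (𝓝 0)}
  add_mem' ha hb := by simpa using ha.add hb
  zero_mem' := by simp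
  smul_mem' c _ hv := by simpa using hv.const_smul c

lemma maxGenEigenspace_le_contractingSubmodule [CompleteSpace 𝕜] (f : Module.End 𝕜 V) {μ : 𝕜}
    (hμ : ‖μ‖ < 1) : f.maxGenEigenspace μ ≤ contractingSubmodule f := by
  intro v hv
  obtain ⟨k, hk⟩ := (f.mem_maxGenEigenspace μ v).1 hv
  show Tendsto _ _ _
  simp_rw [pow_apply_eq_sum_of_pow_sub_smul_apply_eq_zero hk]
  simpa using tendsto_finsetSum (Finset.range k) fun m _ =>
    (tendsto_choose_mul_pow_sub m hμ).smul_const (((f - μ • 1) ^ m) v)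

end

lemma contractingSubmodule_sup_eq_top {V : Type*} [NormedAddCommGroup V] [NormedSpace ℂ V]
    [FiniteDimensional ℂ V] {f f' : Module.End ℂ V} (h : f' * f = 1) (h' : f * f' = 1)
    (hf : ∀ μ, f.HasEigenvalue μ → ‖μ‖ ≠ 1) :
    contractingSubmodule f ⊔ contractingSubmodule f' = ⊤ := by
  rw [eq_top_iff, ← Module.End.iSup_maxGenEigenspace_eq_top f]
  refine iSup_le fun μ => ?_
  rcases lt_trichotomy ‖μ‖ 1 with hμ | hμ | hμ
  · exact le_sup_of_le_left (maxGenEigenspace_le_contractingSubmodule f hμ)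
  · refine le_of_eq_of_le (not_not.1 fun hne => hf μ ?_ hμ) bot_le
    exact (Module.End.hasUnifEigenvalue_iff_hasUnifEigenvalue_one (by simp)).1 hne
  · have hμ0 : μ ≠ 0 := norm_pos_iff.1 (zero_lt_one.trans hμ)
    refine le_sup_of_le_right ((Module.End.maxGenEigenspace_le_maxGenEigenspace_inv h h' hμ0).trans
      (maxGenEigenspace_le_contractingSubmodule f' ?_))
    rw [norm_inv]
    exact inv_lt_one_of_one_lt₀ hμ

section

variable {N : ℕ}

lemma mzpow_eq_zpow (B : Matrix (Fin N) (Fin N) ℝ) (n : ℤ) : mzpow B n = B ^ n := by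
  cases n with
  | ofNat n => exact (zpow_natCast B n).symm
  | negSucc n => rw [mzpow, zpow_negSucc, Matrix.inv_pow']

lemma mem_stableSetD_iff (B : Matrix (Fin N) (Fin N) ℝ) (y : Fin N → ℝ) :
    y ∈ stableSetD B ↔ Tendsto (fun n : ℤ => (B ^ n) *ᵥ y) atTop (𝓝 0) := by
  rw [← Nat.map_cast_int_atTop, tendsto_map'_iff]
  simp [stableSetD, Function.comp_def]

lemma mem_unstableSetD_iff (B : Matrix (Fin N) (Fin N) ℝ) (y : Fin N → ℝ) :
    y ∈ unstableSetD B ↔ Tendsto (fun n : ℤ => (B ^ n) *ᵥ y) atBot (𝓝 0) := by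
  rw [← map_neg_atTop, ← Nat.map_cast_int_atTop, Filter.map_map, tendsto_map'_iff]
  simp [unstableSetD, Function.comp_def, Matrix.inv_pow']

lemma zpow_mulVec_mem_unstableSetD {B : Matrix (Fin N) (Fin N) ℝ} (hB : IsUnit B.det)
    {y : Fin N → ℝ} (hy : y ∈ unstableSetD B) (m : ℤ) : (B ^ m) *ᵥ y ∈ unstableSetD B := by
  rw [mem_unstableSetD_iff] at hy ⊢
  refine (hy.comp (tendsto_atBot_add_const_right _ m tendsto_id)).congr fun n => ?_
  simp [Matrix.mulVec_mulVec, Matrix.zpow_add hB]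

lemma map_ofReal_mulVec_apply (M : Matrix (Fin N) (Fin N) ℝ) (z : Fin N → ℂ) (i : Fin N) :
    ((M.map (Complex.ofReal ·)) *ᵥ z) i =
      ⟨(M *ᵥ fun j => (z j).re) i, (M *ᵥ fun j => (z j).im) i⟩ := by
  apply Complex.ext <;> simp [Matrix.mulVec, dotProduct, Complex.re_sum, Complex.im_sum]

lemma tendsto_re_of_tendsto_mulVec {B : Matrix (Fin N) (Fin N) ℝ} {w : Fin N → ℂ}
    (hw : Tendsto (fun n : ℕ => ((B ^ n).map (Complex.ofReal ·)) *ᵥ w) atTop (𝓝 0)) :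
    Tendsto (fun n : ℕ => (B ^ n) *ᵥ fun i => (w i).re) atTop (𝓝 0) := by
  have hre : Continuous fun (z : Fin N → ℂ) i => (z i).re :=
    continuous_pi fun i => Complex.continuous_re.comp (continuous_apply i)
  convert (hre.tendsto 0).comp hw using 2
  · ext n
    simp [map_ofReal_mulVec_apply]
  · rfl

lemma exists_stable_add_unstable {B : Matrix (Fin N) (Fin N) ℝ} (hB : IsUnit B.det)
    (hhyp : ∀ μ ∈ spectrum ℂ (B.map (Complex.ofReal ·)), ‖μ‖ ≠ 1) (y : Fin N → ℝ) :
    ∃ ys ∈ stableSetD B, ∃ yu ∈ unstableSetD B, y = ys + yu := by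
  set ρ := (Complex.ofRealHom : ℝ →+* ℂ).mapMatrix (m := Fin N)
  set φ : Matrix (Fin N) (Fin N) ℝ →* Module.End ℂ (Fin N → ℂ) :=
    (Matrix.toLinAlgEquiv' : _ ≃ₐ[ℂ] _).toMonoidHom.comp ρ.toMonoidHom
  set f := φ B
  set f' := φ B⁻¹
  have hpow (P : Matrix (Fin N) (Fin N) ℝ) (n : ℕ) (w : Fin N → ℂ) :
      (φ P ^ n) w = ((P ^ n).map (Complex.ofReal ·)) *ᵥ w := by
    rw [← map_pow]; rfl
  have hf : ∀ μ, f.HasEigenvalue μ → ‖μ‖ ≠ 1 := fun μ hμ =>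
    hhyp μ (by simpa [f, φ, AlgEquiv.spectrum_eq] using
      Module.End.hasEigenvalue_iff_mem_spectrum.1 hμ :)
  have hy : cvec y ∈ contractingSubmodule f ⊔ contractingSubmodule f' := by
    rw [contractingSubmodule_sup_eq_top (by simp [f, f', ← map_mul, Matrix.nonsing_inv_mul B hB])
      (by simp [f, f', ← map_mul, Matrix.mul_nonsing_inv B hB]) hf]
    trivial
  obtain ⟨a, ha, c, hc, hac⟩ := Submodule.mem_sup.1 hy
  refine ⟨fun i => (a i).re, ?_, fun i => (c i).re, ?_, ?_⟩
  · exact tendsto_re_of_tendsto_mulVec (ha.congr (hpow B · a))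
  · exact tendsto_re_of_tendsto_mulVec (hc.congr (hpow B⁻¹ · c))
  · funext i
    simpa [cvec] using congr_arg (fun z => (z i).re) hac.symm

lemma mem_UminusD_of_not_isUnit_det {B : Matrix (Fin N) (Fin N) ℝ} (hB : ¬ IsUnit B.det)
    (z : Fin N → ℂ) : z ∈ UminusD B := by
  obtain ⟨v, hv, hBv⟩ := Matrix.exists_mulVec_eq_zero_iff.2 (by simpa [isUnit_iff_ne_zero] using hB)
  have hstable : v ∈ stableSetD B := tendsto_const_nhds.congr' <|
    (eventually_ge_atTop 1).mono fun n hn => by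
      dsimp only
      rw [← Nat.sub_add_cancel hn, pow_succ, ← Matrix.mulVec_mulVec, hBv, Matrix.mulVec_zero]
  -- the junk value `B⁻¹ = 0` makes every vector unstable
  have hunstable (y : Fin N → ℝ) : y ∈ unstableSetD B := tendsto_const_nhds.congr' <|
    (eventually_ge_atTop 1).mono fun n hn => by
      dsimp only
      rw [Matrix.nonsing_inv_apply_not_isUnit B hB, zero_pow (by omega), Matrix.zero_mulVec]
  exact ⟨v, hstable, _, hunstable _, (add_sub_cancel v _).symm, hv⟩

lemma im_mem_stableSetD_of_not_mem_UplusD {B : Matrix (Fin N) (Fin N) ℝ} (hB : IsUnit B.det)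
    (hhyp : ∀ μ ∈ spectrum ℂ (B.map (Complex.ofReal ·)), ‖μ‖ ≠ 1) {z : Fin N → ℂ}
    (hz : z ∉ UplusD B) : (fun i => (z i).im) ∈ stableSetD B := by
  obtain ⟨ys, hys, yu, hyu, h⟩ := exists_stable_add_unstable hB hhyp fun i => (z i).im
  obtain rfl : yu = 0 := not_not.1 fun hne => hz ⟨ys, hys, yu, hyu, h, hne⟩
  simpa [h] using hys

lemma im_mem_unstableSetD_of_not_mem_UminusD {B : Matrix (Fin N) (Fin N) ℝ} (hB : IsUnit B.det)
    (hhyp : ∀ μ ∈ spectrum ℂ (B.map (Complex.ofReal ·)), ‖μ‖ ≠ 1) {z : Fin N → ℂ}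
    (hz : z ∉ UminusD B) : (fun i => (z i).im) ∈ unstableSetD B := by
  obtain ⟨ys, hys, yu, hyu, h⟩ := exists_stable_add_unstable hB hhyp fun i => (z i).im
  obtain rfl : ys = 0 := not_not.1 fun hne => hz ⟨ys, hys, yu, hyu, h, hne⟩
  simpa [h] using hyu

end

section

variable {N : ℕ}

def ofReIm (x y : Fin N → ℝ) : Fin N → ℂ := fun i => ⟨x i, y i⟩

lemma ofReIm_re_im (z : Fin N → ℂ) : ofReIm (fun i => (z i).re) (fun i => (z i).im) = z :=
  funext fun _ => Complex.eta _

lemma continuous_ofReIm (y : Fin N → ℝ) : Continuous (ofReIm · y) :=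
  continuous_pi fun i => Complex.equivRealProdCLM.symm.continuous.comp
    (by fun_prop : Continuous fun x : Fin N → ℝ => (x i, y i))

lemma dist_ofReIm_le (x x' y y' : Fin N → ℝ) :
    dist (ofReIm x y) (ofReIm x' y') ≤ dist x x' + dist y y' := by
  refine dist_pi_le_iff (by positivity) |>.2 fun i => ?_
  calc dist (ofReIm x y i) (ofReIm x' y' i) ≤ dist (x i) (x' i) + dist (y i) (y' i) := by
        rw [dist_eq_norm, Real.dist_eq, Real.dist_eq]
        exact (Complex.norm_le_abs_re_add_abs_im _).trans_eq (by simp [ofReIm])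
    _ ≤ dist x x' + dist y y' := add_le_add (dist_le_pi_dist x x' i) (dist_le_pi_dist y y' i)

noncomputable def realAct (B : Matrix (Fin N) (Fin N) ℝ) (g : (Fin N → ℤ) × ℤ) (x : Fin N → ℝ) :
    Fin N → ℝ :=
  (B ^ g.2) *ᵥ x + fun i => (g.1 i : ℝ)

lemma discAct_ofReIm (B : Matrix (Fin N) (Fin N) ℝ) (b : Fin N → ℤ) (n : ℤ) (x y : Fin N → ℝ) :
    discAct B (b, n) (ofReIm x y) = ofReIm (realAct B (b, n) x) ((B ^ n) *ᵥ y) := by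
  funext i
  apply Complex.ext <;> simp [discAct, realAct, map_ofReal_mulVec_apply, mzpow_eq_zpow, cvec, ofReIm]

def realOrbit (B : Matrix (Fin N) (Fin N) ℝ) (x : Fin N → ℝ) : Set (Fin N → ℝ) :=
  {y | ∃ (b : Fin N → ℤ) (n : ℤ), y = realAct B (b, n) x}

lemma finite_setOf_dist_add_intCast_lt (v t : Fin N → ℝ) (ε : ℝ) :
    {b : Fin N → ℤ | dist (v + fun i => (b i : ℝ)) t < ε}.Finite := by
  have hcast : Tendsto (fun b : Fin N → ℤ => fun i => (b i : ℝ)) cofinite (cocompact _) := by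
    simpa only [coprodᵢ_cofinite, coprodᵢ_cocompact] using
      Tendsto.pi_map_coprodᵢ fun _ : Fin N => Int.tendsto_coe_cofinite
  have hK : (Metric.closedBall (t - v) ε)ᶜ ∈ cocompact (Fin N → ℝ) :=
    (isCompact_closedBall _ _).compl_mem_cocompact
  refine (mem_cofinite.1 (hcast hK)).subset fun b hb => ?_
  simp only [Set.mem_compl_iff, Set.mem_preimage, not_not, Metric.mem_closedBall]
  rw [Set.mem_ofPred_eq, dist_eq_norm] at hb
  rw [dist_eq_norm, sub_sub_eq_add_sub, add_comm]
  exact hb.le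

lemma infinite_setOf_dist_realAct_lt {B : Matrix (Fin N) (Fin N) ℝ} {x : Fin N → ℝ}
    (hx : Dense (realOrbit B x)) (t : Fin N → ℝ) {ε : ℝ} (hε : 0 < ε) :
    {g : (Fin N → ℤ) × ℤ | dist (realAct B g x) t < ε}.Infinite := by
  rcases isEmpty_or_nonempty (Fin N) with hN | hN
  · convert Set.infinite_univ (α := (Fin N → ℤ) × ℤ)
    exact Set.eq_univ_of_forall fun g => by simp [Subsingleton.elim (_ : Fin N → ℝ) t, hε]
  intro hfin
  have hopen : IsOpen (Metric.ball t ε \ (realAct B · x) '' _) :=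
    Metric.isOpen_ball.sdiff (hfin.image _).isClosed
  have hne : (Metric.ball t ε \ (realAct B · x) '' _).Nonempty :=
    ((infinite_of_mem_nhds t (Metric.ball_mem_nhds t hε)).sdiff (hfin.image _)).nonempty
  obtain ⟨_, ⟨b, n, rfl⟩, hball, hnot⟩ := hx.exists_mem_open hopen hne
  exact hnot ⟨(b, n), hball, rfl⟩

lemma infinite_setOf_dist_realAct_lt_and {B : Matrix (Fin N) (Fin N) ℝ} {x : Fin N → ℝ}
    (hx : Dense (realOrbit B x)) (t : Fin N → ℝ) {ε : ℝ} (hε : 0 < ε) {P : ℤ → Prop}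
    (hP : ∀ᶠ n in cofinite, P n) :
    {g : (Fin N → ℤ) × ℤ | dist (realAct B g x) t < ε ∧ P g.2}.Infinite := by
  have hbad : {g : (Fin N → ℤ) × ℤ | dist (realAct B g x) t < ε ∧ ¬ P g.2}.Finite := by
    refine (hP.biUnion fun n _ =>
      (finite_setOf_dist_add_intCast_lt ((B ^ n) *ᵥ x) t ε).image (·, n)).subset ?_
    rintro ⟨b, n⟩ ⟨hd, hn⟩
    exact Set.mem_biUnion hn ⟨b, hd, rfl⟩
  refine ((infinite_setOf_dist_realAct_lt hx t hε).sdiff hbad).mono ?_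
  rintro g ⟨hd, hg⟩
  exact ⟨hd, not_not.1 fun hn => hg ⟨hd, hn⟩⟩

lemma exists_dist_discAct_le {B : Matrix (Fin N) (Fin N) ℝ} (hB : IsUnit B.det)
    (g : (Fin N → ℤ) × ℤ) (x y y' : Fin N → ℝ) :
    ∃ z, dist z (ofReIm x y) ≤ ‖(B ^ (-g.2)) *ᵥ y'‖ ∧
      dist (discAct B g z) (ofReIm x y') ≤ dist (realAct B g x) x + ‖(B ^ g.2) *ᵥ y‖ := by
  obtain ⟨b, n⟩ := g
  refine ⟨ofReIm x (y + (B ^ (-n)) *ᵥ y'), ?_, ?_⟩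
  · simpa using dist_ofReIm_le x x (y + (B ^ (-n)) *ᵥ y') y
  · have hcancel : (B ^ n) *ᵥ ((B ^ (-n)) *ᵥ y') = y' := by
      rw [Matrix.mulVec_mulVec, ← Matrix.zpow_add hB, add_neg_cancel, zpow_zero,
        Matrix.one_mulVec]
    rw [discAct_ofReIm, Matrix.mulVec_add, hcancel]
    simpa using dist_ofReIm_le (realAct B (b, n) x) x ((B ^ n) *ᵥ y + y') y'

lemma not_dense_realOrbit {B : Matrix (Fin N) (Fin N) ℝ} (hB : IsUnit B.det)
    {U : Set (Fin N → ℂ)} (hUopen : IsOpen U)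
    (hpd : ∀ K : Set (Fin N → ℂ), IsCompact K → K ⊆ U →
      Set.Finite {g : (Fin N → ℤ) × ℤ | ∃ z ∈ K, discAct B g z ∈ K})
    {x ys yu : Fin N → ℝ} (hys : ys ∈ stableSetD B) (hyu : yu ∈ unstableSetD B)
    (hs : ofReIm x ys ∈ U) (hu : ofReIm x yu ∈ U) : ¬ Dense (realOrbit B x) := by
  intro hx
  obtain ⟨rs, hrs, hrsU⟩ := Metric.nhds_basis_closedBall.mem_iff.1 (hUopen.mem_nhds hs)
  obtain ⟨ru, hru, hruU⟩ := Metric.nhds_basis_closedBall.mem_iff.1 (hUopen.mem_nhds hu)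
  obtain ⟨δ, hδ, hδs, hδu⟩ : ∃ δ > 0, 2 * δ ≤ rs ∧ 2 * δ ≤ ru :=
    ⟨min rs ru / 2, by positivity, by linarith [min_le_left rs ru],
      by linarith [min_le_right rs ru]⟩
  set K := Metric.closedBall (ofReIm x ys) (2 * δ) ∪ Metric.closedBall (ofReIm x yu) (2 * δ)
  have hKU : K ⊆ U := Set.union_subset
    ((Metric.closedBall_subset_closedBall hδs).trans hrsU)
    ((Metric.closedBall_subset_closedBall hδu).trans hruU)
  have hP : ∀ᶠ n : ℤ in cofinite,
      (‖(B ^ n) *ᵥ ys‖ < δ ∧ ‖(B ^ (-n)) *ᵥ yu‖ < δ) ∨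
        (‖(B ^ n) *ᵥ yu‖ < δ ∧ ‖(B ^ (-n)) *ᵥ ys‖ < δ) := by
    have hsmall {l : Filter ℤ} {f : ℤ → Fin N → ℝ} (hf : Tendsto f l (𝓝 0)) :
        ∀ᶠ n in l, ‖f n‖ < δ :=
      (tendsto_zero_iff_norm_tendsto_zero.1 hf).eventually (gt_mem_nhds hδ)
    rw [mem_stableSetD_iff] at hys
    rw [mem_unstableSetD_iff] at hyu
    rw [Int.cofinite_eq, eventually_sup]
    exact ⟨((hsmall hyu).and (hsmall (hys.comp tendsto_neg_atBot_atTop))).mono fun _ h => .inr h,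
      ((hsmall hys).and (hsmall (hyu.comp tendsto_neg_atTop_atBot))).mono fun _ h => .inl h⟩
  refine infinite_setOf_dist_realAct_lt_and hx x hδ hP
    ((hpd K ((isCompact_closedBall _ _).union (isCompact_closedBall _ _)) hKU).subset ?_)
  rintro g ⟨hg, hn | hn⟩
  · obtain ⟨z, hz, hgz⟩ := exists_dist_discAct_le hB g x ys yu
    exact ⟨z, .inl (by simp only [Metric.mem_closedBall]; linarith),
      .inr (by simp only [Metric.mem_closedBall]; linarith)⟩
  · obtain ⟨z, hz, hgz⟩ := exists_dist_discAct_le hB g x yu ys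
    exact ⟨z, .inr (by simp only [Metric.mem_closedBall]; linarith),
      .inl (by simp only [Metric.mem_closedBall]; linarith)⟩

lemma exists_dense_realOrbit {B : Matrix (Fin N) (Fin N) ℝ} (hB : IsUnit B.det)
    {U : Set (Fin N → ℂ)} (hUopen : IsOpen U)
    (hUinv : ∀ g : (Fin N → ℤ) × ℤ, ∀ z ∈ U, discAct B g z ∈ U)
    (hae : ∀ᵐ x ∂(volume : Measure (Fin N → ℝ)), Dense (realOrbit B x))
    {x₁ x₂ ys yu : Fin N → ℝ} (hyu : yu ∈ unstableSetD B)
    (h₁ : ofReIm x₁ ys ∈ U) (h₂ : ofReIm x₂ yu ∈ U) :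
    ∃ x yu', yu' ∈ unstableSetD B ∧ ofReIm x ys ∈ U ∧ ofReIm x yu' ∈ U ∧
      Dense (realOrbit B x) := by
  have hopen (y : Fin N → ℝ) : IsOpen {x | ofReIm x y ∈ U} :=
    hUopen.preimage (continuous_ofReIm y)
  obtain ⟨x₀, hx₀, hx₀U⟩ := (Measure.dense_of_ae hae).exists_mem_open (hopen yu) ⟨x₂, h₂⟩
  obtain ⟨_, ⟨b, n, rfl⟩, hgx₀⟩ := hx₀.exists_mem_open (hopen ys) ⟨x₁, h₁⟩
  have hgx₀U := hUinv (b, n) _ hx₀U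
  rw [discAct_ofReIm] at hgx₀U
  obtain ⟨x, hx, hxs, hxu⟩ := (Measure.dense_of_ae hae).exists_mem_open
    ((hopen ys).inter (hopen ((B ^ n) *ᵥ yu))) ⟨_, hgx₀, hgx₀U⟩
  exact ⟨x, _, zpow_mulVec_mem_unstableSetD hB hyu n, hxs, hxu, hx⟩

end

/-- If `B` has no eigenvalue of modulus `1`, `U ⊆ ℂ^N` is a `ℤ^N ⋊_B ℤ`-invariant open
set on which the action is properly discontinuous, and almost every real point has a
dense orbit in `ℝ^N`, then `U ⊆ U⁺` or `U ⊆ U⁻`. -/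
theorem discrete_unique_maximal {N : ℕ} (B : Matrix (Fin N) (Fin N) ℝ)
    (hhyp : ∀ μ ∈ spectrum ℂ (B.map (Complex.ofReal ·)), ‖μ‖ ≠ 1)
    (U : Set (Fin N → ℂ)) (hUopen : IsOpen U)
    (hUinv : ∀ g : (Fin N → ℤ) × ℤ, ∀ z ∈ U, discAct B g z ∈ U)
    (hpd : ∀ K : Set (Fin N → ℂ), IsCompact K → K ⊆ U →
      Set.Finite {g : (Fin N → ℤ) × ℤ | ∃ z ∈ K, discAct B g z ∈ K})
    (hae : ∀ᵐ x ∂(volume : Measure (Fin N → ℝ)),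
      Dense {y : Fin N → ℝ | ∃ (b : Fin N → ℤ) (n : ℤ),
        y = (mzpow B n).mulVec x + fun i => (b i : ℝ)}) :
    U ⊆ UplusD B ∨ U ⊆ UminusD B := by
  by_contra hcon
  obtain ⟨⟨z₁, hz₁U, hz₁⟩, ⟨z₂, hz₂U, hz₂⟩⟩ :=
    (not_or.1 hcon).imp Set.not_subset.1 Set.not_subset.1
  by_cases hB : IsUnit B.det
  · simp only [mzpow_eq_zpow] at hae
    rw [← ofReIm_re_im z₁] at hz₁U
    rw [← ofReIm_re_im z₂] at hz₂U
    obtain ⟨x, yu, hyu, hxs, hxu, hx⟩ := exists_dense_realOrbit hB hUopen hUinv hae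
      (im_mem_unstableSetD_of_not_mem_UminusD hB hhyp hz₂) hz₁U hz₂U
    exact not_dense_realOrbit hB hUopen hpd (im_mem_stableSetD_of_not_mem_UplusD hB hhyp hz₁)
      hyu hxs hxu hx
  · exact hz₂ (mem_UminusD_of_not_isUnit_det hB z₂)
end
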